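/- There exists a constant c > 0 with the following property: for every integer n ≥ 8 with M = ⌊n/4⌋, every strategy S, and every integer s ≥ 1, if there is an index t with 1 ≤ t ≤ M such that among the rounds i ∈ {t, t+1, …, M−1} the number of i with x_i = x_{i+1} (pauses in the x-projection) exceeds the number of i with x_i ≠ x_{i+1} (moves in the x-projection) by at least s, then t(S) ≥ c s². -/

import Mathlib

/-!
Write `g_i(x) = ∑_y p_S^i(x, y)` for the column sums and `x_i` for the survivor's abscissa.
In the column `x_i` the cell `(x_i, y_i)` is caught and every other cell inherits the value of
its neighbour towards `y_i`, so `g_i(x_i) ≥ g_{i+1}(x_i) + 1`; in a column `x ≠ x_i` the two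
halves of the recursion give `2 g_i(x) ≥ g_{i+1}(x) + g_{i+1}(x')`, `x'` the neighbour of `x`
towards `x_i`. Consequently the total mass `∑ g_i` does not decrease as `i` decreases, and `g_i`
dominates the tent `h_i - 2|x - x_i|`, whose height `h_i` gains 1 at every pause and loses 1
at every move of the `x`-projection. At round `t` the height is at least `s`, so each of the
`2⌊s/4⌋ + 1` columns nearest to `x_t` carries mass at least `s/2`, and `t(S) ≥ s²/8`.
-/

open Finset

/-- One step of the backward recursion for the catch probabilities: given the survivor's
position `c = (x_i, y_i)` in round `i` and the function `p_S^{i+1}`, produce `p_S^i`. -/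
noncomputable def pstep (c : ℤ × ℤ) (f : ℤ × ℤ → ℝ) : ℤ × ℤ → ℝ :=
  fun q =>
    if |q.1 - c.1| + |q.2 - c.2| ≤ 1 then 1
    else if q.1 ≠ c.1 ∧ q.2 ≠ c.2 then
      (f (q.1 + Int.sign (c.1 - q.1), q.2) + f (q.1, q.2 + Int.sign (c.2 - q.2))) / 2
    else if q.1 = c.1 then f (q.1, q.2 + Int.sign (c.2 - q.2))
    else f (q.1 + Int.sign (c.1 - q.1), q.2)

/-- `pAux S M j` is `p_S^{M-j}`: `pAux S M 0 = p_S^M` and each further step applies the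
backward recursion centred at the survivor's position `S (M - (j+1))`. -/
noncomputable def pAux (S : ℕ → ℤ × ℤ) (M : ℕ) : ℕ → ℤ × ℤ → ℝ
  | 0 => fun q => if |q.1 - (S M).1| + |q.2 - (S M).2| ≤ 1 then 1 else 0
  | j + 1 => pstep (S (M - (j + 1))) (pAux S M j)

/-- `pS S M i = p_S^i` (for `1 ≤ i ≤ M`). -/
noncomputable def pS (S : ℕ → ℤ × ℤ) (M : ℕ) (i : ℕ) : ℤ × ℤ → ℝ :=
  pAux S M (M - i)

/-- `t(S) = ∑_{(x,y) ∈ ℤ²} p_S(x,y)` where `p_S = p_S^1`. -/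
noncomputable def tS (S : ℕ → ℤ × ℤ) (M : ℕ) : ℝ :=
  ∑ᶠ q : ℤ × ℤ, pS S M 1 q

/-- A strategy for the first `M` moves: a sequence of vertices of `ℤ²`, consecutive ones at
distance at most `1`, finishing at `(0,0)`. -/
def IsStrategy (S : ℕ → ℤ × ℤ) (M : ℕ) : Prop :=
  S M = (0, 0) ∧
    ∀ i, 1 ≤ i → i < M → |(S (i + 1)).1 - (S i).1| + |(S (i + 1)).2 - (S i).2| ≤ 1


def towards (c y : ℤ) : ℤ := y + Int.sign (c - y)

lemma abs_towards_sub {c y : ℤ} (h : y ≠ c) : |towards c y - c| = |y - c| - 1 := by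
  unfold towards
  rcases lt_or_gt_of_ne h with h | h
  · rw [Int.sign_eq_one_of_pos (by omega)]
    simp only [Int.abs_eq_natAbs]; omega
  · rw [Int.sign_eq_neg_one_of_neg (by omega)]
    simp only [Int.abs_eq_natAbs]; omega

lemma abs_sub_one_le_abs_towards (c y : ℤ) : |y| - 1 ≤ |towards c y| := by
  unfold towards
  rcases Int.sign_trichotomy (c - y) with h | h | h <;> rw [h] <;>
    simp only [Int.abs_eq_natAbs] <;> omega

def away (c y : ℤ) : ℤ := if c ≤ y then y + 1 else y - 1

lemma towards_away (c y : ℤ) : towards c (away c y) = y := by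
  unfold towards away
  split_ifs with h
  · rw [Int.sign_eq_neg_one_of_neg (by omega)]; ring
  · rw [Int.sign_eq_one_of_pos (by omega)]; ring

lemma away_ne (c y : ℤ) : away c y ≠ c := by
  unfold away; split_ifs <;> omega

lemma away_injective (c : ℤ) : Function.Injective (away c) := by
  intro a b h
  unfold away at h
  split_ifs at h <;> omega

lemma sum_Icc_le_sum_erase_towards {K : ℤ} (c : ℤ) {g : ℤ → ℝ} (hg0 : ∀ y, 0 ≤ g y)
    (hg : ∀ y, g y ≠ 0 → |y| < K) :
    ∑ y ∈ Icc (-K) K, g y ≤ ∑ y ∈ (Icc (-K) K).erase c, g (towards c y) := by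
  calc ∑ y ∈ Icc (-K) K, g y = ∑ y ∈ Icc (-K + 1) (K - 1), g y := by
        refine (sum_subset (fun y => by simp only [mem_Icc]; omega) fun y _ hy => ?_).symm
        by_contra h
        have := abs_lt.1 (hg y h)
        simp only [mem_Icc] at hy
        omega
    _ = ∑ y ∈ (Icc (-K + 1) (K - 1)).image (away c), g (towards c y) := by
        rw [sum_image (away_injective c).injOn]
        simp only [towards_away]
    _ ≤ ∑ y ∈ (Icc (-K) K).erase c, g (towards c y) := by
        refine sum_le_sum_of_subset_of_nonneg ?_ fun _ _ _ => hg0 _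
        simp only [subset_iff, mem_image, mem_erase, mem_Icc]
        rintro _ ⟨y, hy, rfl⟩
        refine ⟨away_ne c y, ?_⟩
        unfold away
        split_ifs <;> omega

section Step

variable {c : ℤ × ℤ} {f : ℤ × ℤ → ℝ}

lemma pstep_nonneg (hf0 : ∀ q, 0 ≤ f q) (q : ℤ × ℤ) : 0 ≤ pstep c f q := by
  unfold pstep
  split_ifs
  · exact zero_le_one
  · linarith [hf0 (q.1 + Int.sign (c.1 - q.1), q.2), hf0 (q.1, q.2 + Int.sign (c.2 - q.2))]
  all_goals exact hf0 _

lemma pstep_le_one (hf1 : ∀ q, f q ≤ 1) (q : ℤ × ℤ) : pstep c f q ≤ 1 := by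
  unfold pstep
  split_ifs
  · exact le_rfl
  · linarith [hf1 (q.1 + Int.sign (c.1 - q.1), q.2), hf1 (q.1, q.2 + Int.sign (c.2 - q.2))]
  all_goals exact hf1 _

lemma pstep_self : pstep c f c = 1 := if_pos (by simp)

lemma le_pstep_fst (hf1 : ∀ q, f q ≤ 1) (y : ℤ) :
    f (c.1, towards c.2 y) ≤ pstep c f (c.1, y) := by
  unfold pstep
  split_ifs with h
  · exact hf1 _
  · simp_all
  · exact le_rfl
  · simp_all

lemma le_pstep_snd (hf1 : ∀ q, f q ≤ 1) (x : ℤ) :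
    f (towards c.1 x, c.2) ≤ pstep c f (x, c.2) := by
  unfold pstep
  split_ifs with h
  · exact hf1 _
  · simp_all
  · simp_all
  · exact le_rfl

lemma pstep_of_ne_of_ne {x y : ℤ} (hx : x ≠ c.1) (hy : y ≠ c.2) :
    pstep c f (x, y) = (f (towards c.1 x, y) + f (x, towards c.2 y)) / 2 := by
  have : ¬ |x - c.1| + |y - c.2| ≤ 1 := by
    have := Int.one_le_abs (sub_ne_zero.2 hx)
    have := Int.one_le_abs (sub_ne_zero.2 hy)
    omega
  simp only [pstep, if_neg this, if_pos (And.intro hx hy), towards]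

end Step

noncomputable def colSum (K : ℤ) (f : ℤ × ℤ → ℝ) (x : ℤ) : ℝ := ∑ y ∈ Icc (-K) K, f (x, y)

lemma colSum_nonneg {K : ℤ} {f : ℤ × ℤ → ℝ} (hf0 : ∀ q, 0 ≤ f q) (x : ℤ) : 0 ≤ colSum K f x :=
  sum_nonneg fun _ _ => hf0 _

section ColumnStep

variable {K : ℤ} {c : ℤ × ℤ} {f : ℤ × ℤ → ℝ}

lemma colSum_add_one_le_colSum_pstep (hf0 : ∀ q, 0 ≤ f q) (hf1 : ∀ q, f q ≤ 1)
    (hf : ∀ q, f q ≠ 0 → |q.2| < K) (hc : |c.2| ≤ K) :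
    colSum K f c.1 + 1 ≤ colSum K (pstep c f) c.1 := by
  have hcol := sum_Icc_le_sum_erase_towards c.2 (fun y => hf0 (c.1, y)) fun y => hf (c.1, y)
  have hstep : ∑ y ∈ (Icc (-K) K).erase c.2, f (c.1, towards c.2 y) ≤
      ∑ y ∈ (Icc (-K) K).erase c.2, pstep c f (c.1, y) :=
    sum_le_sum fun y _ => le_pstep_fst hf1 y
  have hcI : c.2 ∈ Icc (-K) K := mem_Icc.2 (abs_le.1 hc)
  have hsplit := add_sum_erase (Icc (-K) K) (fun y => pstep c f (c.1, y)) hcI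
  simp only [pstep_self] at hsplit
  rw [colSum, colSum, ← hsplit]
  linarith

lemma colSum_add_colSum_towards_le (hf0 : ∀ q, 0 ≤ f q) (hf1 : ∀ q, f q ≤ 1)
    (hf : ∀ q, f q ≠ 0 → |q.2| < K) (hc : |c.2| ≤ K) {x : ℤ} (hx : x ≠ c.1) :
    colSum K f x + colSum K f (towards c.1 x) ≤ 2 * colSum K (pstep c f) x := by
  have hcI : c.2 ∈ Icc (-K) K := mem_Icc.2 (abs_le.1 hc)
  have hcol := sum_Icc_le_sum_erase_towards c.2 (fun y => hf0 (x, y)) fun y => hf (x, y)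
  have hsplit := add_sum_erase (Icc (-K) K) (fun y => f (towards c.1 x, y)) hcI
  have hsplit' := add_sum_erase (Icc (-K) K) (fun y => pstep c f (x, y)) hcI
  have hoff : ∑ y ∈ (Icc (-K) K).erase c.2, (f (towards c.1 x, y) + f (x, towards c.2 y)) =
      2 * ∑ y ∈ (Icc (-K) K).erase c.2, pstep c f (x, y) := by
    rw [mul_sum]
    refine sum_congr rfl fun y hy => ?_
    rw [pstep_of_ne_of_ne hx (ne_of_mem_erase hy)]
    ring
  rw [sum_add_distrib] at hoff
  rw [colSum, colSum, colSum, ← hsplit, ← hsplit']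
  linarith [le_pstep_snd hf1 x (c := c), hf0 (towards c.1 x, c.2)]

end ColumnStep

noncomputable def tent (A : ℝ) (c x : ℤ) : ℝ := A - 2 * |(x : ℝ) - c|

section ColumnRecursion

variable {g h : ℤ → ℝ} {c : ℤ}

lemma tent_le_of_step {A : ℝ} {c' : ℤ} (hg : ∀ x, tent A c' x ≤ g x) (hcenter : g c + 1 ≤ h c)
    (hoff : ∀ x ≠ c, g x + g (towards c x) ≤ 2 * h x) (x : ℤ) :
    tent (A + 1 - 2 * |(c : ℝ) - c'|) c x ≤ h x := by
  unfold tent at *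
  rcases eq_or_ne x c with rfl | hx
  · simp only [sub_self, abs_zero]
    linarith [hg x]
  have hτ : |(towards c x : ℝ) - c| = |(x : ℝ) - c| - 1 := by
    exact_mod_cast abs_towards_sub hx
  linarith [hg x, hg (towards c x), hoff x hx, abs_sub_le (x : ℝ) c c',
    abs_sub_le (towards c x : ℝ) c c']

lemma sum_Icc_le_sum_Icc_of_step {K : ℤ} (hg0 : ∀ x, 0 ≤ g x) (hg : ∀ x, g x ≠ 0 → |x| < K)
    (hc : |c| ≤ K) (hcenter : g c ≤ h c) (hoff : ∀ x ≠ c, g x + g (towards c x) ≤ 2 * h x) :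
    ∑ x ∈ Icc (-K) K, g x ≤ ∑ x ∈ Icc (-K) K, h x := by
  have hcI : c ∈ Icc (-K) K := mem_Icc.2 (abs_le.1 hc)
  have hτ := sum_Icc_le_sum_erase_towards c hg0 hg
  have hsum : ∑ x ∈ (Icc (-K) K).erase c, (g x + g (towards c x)) ≤
      ∑ x ∈ (Icc (-K) K).erase c, 2 * h x :=
    sum_le_sum fun x hx => hoff x (ne_of_mem_erase hx)
  rw [sum_add_distrib, ← mul_sum] at hsum
  rw [← add_sum_erase _ g hcI, ← add_sum_erase _ h hcI] at *
  linarith [hg0 c]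

lemma mul_le_sum_Icc_of_tent_le {K : ℤ} {A : ℝ} (r : ℕ) (hr : |c| + r ≤ K) (hg0 : ∀ x, 0 ≤ g x)
    (hg : ∀ x, tent A c x ≤ g x) : (2 * r + 1) * (A - 2 * r) ≤ ∑ x ∈ Icc (-K) K, g x := by
  have hwin : ∀ x ∈ Icc (c - r) (c + r), A - 2 * r ≤ g x := by
    intro x hx
    have : |x - c| ≤ r := abs_le.2 (by simp only [mem_Icc] at hx; omega)
    have : |(x : ℝ) - c| ≤ r := by exact_mod_cast this
    linarith [hg x, show tent A c x = A - 2 * |(x : ℝ) - c| from rfl]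
  calc (2 * r + 1) * (A - 2 * r) = #(Icc (c - r) (c + r)) • (A - 2 * r) := by
        rw [Int.card_Icc, nsmul_eq_mul,
          show c + r + 1 - (c - r) = ((2 * r + 1 : ℕ) : ℤ) by push_cast; ring, Int.toNat_natCast]
        push_cast; ring
    _ ≤ ∑ x ∈ Icc (c - r) (c + r), g x := card_nsmul_le_sum _ _ _ hwin
    _ ≤ ∑ x ∈ Icc (-K) K, g x := by
        refine sum_le_sum_of_subset_of_nonneg (fun x hx => ?_) fun x _ _ => hg0 x
        simp only [mem_Icc] at hx ⊢
        have := le_abs_self c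
        have := neg_abs_le c
        omega

end ColumnRecursion

noncomputable def mass (K : ℤ) (f : ℤ × ℤ → ℝ) : ℝ := ∑ x ∈ Icc (-K) K, colSum K f x

noncomputable def tentHeight (S : ℕ → ℤ × ℤ) (M i : ℕ) : ℝ :=
  ∑ k ∈ Ico i M, (1 - 2 * |((S (k + 1)).1 : ℝ) - (S k).1|)

lemma pS_nonneg (S : ℕ → ℤ × ℤ) (M i : ℕ) (q : ℤ × ℤ) : 0 ≤ pS S M i q := by
  unfold pS
  induction M - i generalizing q with
  | zero => simp only [pAux]; split_ifs <;> norm_num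
  | succ j ih => exact pstep_nonneg ih q

lemma pS_le_one (S : ℕ → ℤ × ℤ) (M i : ℕ) (q : ℤ × ℤ) : pS S M i q ≤ 1 := by
  unfold pS
  induction M - i generalizing q with
  | zero => simp only [pAux]; split_ifs <;> norm_num
  | succ j ih => exact pstep_le_one ih q

section Strategy

variable {S : ℕ → ℤ × ℤ} {M : ℕ}

lemma pS_of_lt {i : ℕ} (h : i < M) : pS S M i = pstep (S i) (pS S M (i + 1)) := by
  rw [pS, pS, show M - i = M - (i + 1) + 1 by omega, pAux, show M - (M - (i + 1) + 1) = i by omega]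

lemma IsStrategy.abs_add_abs_le (hS : IsStrategy S M) {i : ℕ} (hi : 1 ≤ i) (hiM : i ≤ M) :
    |(S i).1| + |(S i).2| ≤ M - i := by
  induction hiM using Nat.decreasingInduction with
  | self => simp [hS.1]
  | of_succ k hk ih =>
    have := hS.2 k hi hk
    have := ih (by omega)
    simp only [Int.abs_eq_natAbs] at *
    omega

lemma IsStrategy.pS_eq_zero_of_lt_abs_add_abs (hS : IsStrategy S M) {i : ℕ} (hi : 1 ≤ i)
    (hiM : i ≤ M) {q : ℤ × ℤ} (hq : (M : ℤ) - i + 1 < |q.1| + |q.2|) : pS S M i q = 0 := by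
  induction hiM using Nat.decreasingInduction generalizing q with
  | self =>
    simp only [pS, Nat.sub_self, pAux, hS.1, sub_zero, ite_eq_right_iff]
    omega
  | of_succ k hk ih =>
    have hSk := hS.abs_add_abs_le hi hk.le
    have hfar : ¬ |q.1 - (S k).1| + |q.2 - (S k).2| ≤ 1 := by
      simp only [Int.abs_eq_natAbs] at *
      omega
    have h1 := abs_sub_one_le_abs_towards (S k).1 q.1
    have h2 := abs_sub_one_le_abs_towards (S k).2 q.2
    have z1 : pS S M (k + 1) (towards (S k).1 q.1, q.2) = 0 := ih (by omega) (by push_cast; omega)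
    have z2 : pS S M (k + 1) (q.1, towards (S k).2 q.2) = 0 := ih (by omega) (by push_cast; omega)
    rw [pS_of_lt hk, pstep, if_neg hfar]
    unfold towards at z1 z2
    split_ifs <;> simp [z1, z2]

lemma IsStrategy.abs_lt_of_pS_ne_zero (hS : IsStrategy S M) {K : ℤ} (hK : (M : ℤ) < K)
    {i : ℕ} (hi : 1 ≤ i) (hiM : i ≤ M) {q : ℤ × ℤ} (hq : pS S M i q ≠ 0) :
    |q.1| < K ∧ |q.2| < K := by
  have := not_lt.1 (mt (hS.pS_eq_zero_of_lt_abs_add_abs hi hiM) hq)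
  have := abs_nonneg q.1
  have := abs_nonneg q.2
  constructor <;> omega

lemma IsStrategy.colSum_pS_succ_add_one_le (hS : IsStrategy S M) {K : ℤ} (hK : (M : ℤ) < K) {i : ℕ}
    (hi : 1 ≤ i) (hiM : i < M) :
    colSum K (pS S M (i + 1)) (S i).1 + 1 ≤ colSum K (pS S M i) (S i).1 := by
  have := hS.abs_add_abs_le hi hiM.le
  rw [pS_of_lt hiM]
  exact colSum_add_one_le_colSum_pstep (pS_nonneg S M _) (pS_le_one S M _)
    (fun q hq => (hS.abs_lt_of_pS_ne_zero hK (by omega) hiM hq).2)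
    (by have := abs_nonneg (S i).1; omega)

lemma IsStrategy.colSum_pS_succ_add_colSum_towards_le (hS : IsStrategy S M) {K : ℤ}
    (hK : (M : ℤ) < K) {i : ℕ} (hi : 1 ≤ i) (hiM : i < M) {x : ℤ} (hx : x ≠ (S i).1) :
    colSum K (pS S M (i + 1)) x + colSum K (pS S M (i + 1)) (towards (S i).1 x) ≤
      2 * colSum K (pS S M i) x := by
  have := hS.abs_add_abs_le hi hiM.le
  rw [pS_of_lt hiM]
  exact colSum_add_colSum_towards_le (pS_nonneg S M _) (pS_le_one S M _)
    (fun q hq => (hS.abs_lt_of_pS_ne_zero hK (by omega) hiM hq).2)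
    (by have := abs_nonneg (S i).1; omega) hx

lemma IsStrategy.tent_le_colSum (hS : IsStrategy S M) {K : ℤ} (hK : (M : ℤ) < K) {i : ℕ}
    (hi : 1 ≤ i) (hiM : i ≤ M) (x : ℤ) :
    tent (tentHeight S M i) (S i).1 x ≤ colSum K (pS S M i) x := by
  induction hiM using Nat.decreasingInduction generalizing x with
  | self =>
    simp only [tent, tentHeight, Ico_self, sum_empty, zero_sub]
    linarith [abs_nonneg ((x : ℝ) - (S M).1), colSum_nonneg (K := K) (pS_nonneg S M M) x]
  | of_succ k hk ih =>
    have := tent_le_of_step (ih (by omega)) (hS.colSum_pS_succ_add_one_le hK hi hk)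
      (fun x hx => hS.colSum_pS_succ_add_colSum_towards_le hK hi hk hx) x
    rwa [tentHeight, sum_eq_sum_Ico_succ_bot hk, ← tentHeight, abs_sub_comm, add_comm,
      ← add_sub_assoc]

lemma IsStrategy.mass_antitoneOn (hS : IsStrategy S M) {K : ℤ} (hK : (M : ℤ) < K) :
    AntitoneOn (fun i => mass K (pS S M i)) (Set.Icc 1 M) := by
  refine antitoneOn_of_add_one_le Set.ordConnected_Icc fun i _ hi hi' => ?_
  have hiM : i < M := by simp only [Set.mem_Icc] at hi'; omega
  have hi1 : 1 ≤ i := hi.1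
  have := hS.abs_add_abs_le hi1 hiM.le
  refine sum_Icc_le_sum_Icc_of_step (colSum_nonneg (pS_nonneg S M _)) (fun x hx => ?_)
    (c := (S i).1) (by have := abs_nonneg (S i).2; omega)
    (by linarith [hS.colSum_pS_succ_add_one_le hK hi1 hiM])
    fun x hx => hS.colSum_pS_succ_add_colSum_towards_le hK hi1 hiM hx
  obtain ⟨y, -, hy⟩ := exists_ne_zero_of_sum_ne_zero hx
  exact (hS.abs_lt_of_pS_ne_zero hK (by omega) hi'.2 hy).1

lemma IsStrategy.tentHeight_eq (hS : IsStrategy S M) {t : ℕ} (ht : 1 ≤ t) :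
    tentHeight S M t = #{i ∈ Ico t M | (S i).1 = (S (i + 1)).1} -
      #{i ∈ Ico t M | (S i).1 ≠ (S (i + 1)).1} := by
  have hstep : ∀ i ∈ Ico t M, 1 - 2 * |((S (i + 1)).1 : ℝ) - (S i).1| =
      if (S i).1 = (S (i + 1)).1 then 1 else -1 := by
    intro i hi
    have := hS.2 i (by simp only [mem_Ico] at hi; omega) (mem_Ico.1 hi).2
    split_ifs with h
    · simp [h]
    · have : |(S (i + 1)).1 - (S i).1| = 1 := by
        simp only [Int.abs_eq_natAbs] at this ⊢; omega
      have : |((S (i + 1)).1 : ℝ) - (S i).1| = 1 := by exact_mod_cast this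
      rw [this]; norm_num
  rw [tentHeight, sum_congr rfl hstep, sum_ite]
  simp [sub_eq_add_neg]

lemma IsStrategy.tS_eq_mass (hS : IsStrategy S M) {K : ℤ} (hK : (M : ℤ) < K) (hM : 1 ≤ M) :
    tS S M = mass K (pS S M 1) := by
  rw [tS, finsum_eq_sum_of_support_subset (s := Icc (-K) K ×ˢ Icc (-K) K), sum_product] 
  · rfl
  intro q hq
  have := hS.abs_lt_of_pS_ne_zero hK le_rfl hM hq
  rw [abs_lt, abs_lt] at this
  simp only [coe_product, coe_Icc, Set.mem_prod, Set.mem_Icc]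
  omega

end Strategy

/-- If at some point `t` the number of rounds `i ∈ {t, …, M-1}` in which the survivor
pauses in the `x`-projection (`x_i = x_{i+1}`) exceeds the number of rounds in which he
moves (`x_i ≠ x_{i+1}`) by at least `s`, then `t(S) ≥ c s²` for an absolute constant
`c > 0`. -/
theorem stmt_9 :
    ∃ c : ℝ, 0 < c ∧
      ∀ n : ℕ, 8 ≤ n → ∀ M : ℕ, M = n / 4 →
        ∀ S : ℕ → ℤ × ℤ, IsStrategy S M →
          ∀ s : ℕ, 1 ≤ s →
            (∃ t : ℕ, 1 ≤ t ∧ t ≤ M ∧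
              ((Finset.Ico t M).filter (fun i => (S i).1 = (S (i + 1)).1)).card ≥
                ((Finset.Ico t M).filter (fun i => (S i).1 ≠ (S (i + 1)).1)).card + s) →
            c * (s : ℝ) ^ 2 ≤ tS S M := by
  refine ⟨1 / 8, by norm_num, ?_⟩
  rintro - - M - S hS s - ⟨t, ht, htM, hcount⟩
  have hsM : s ≤ M - t := by
    have := card_filter_add_card_filter_not (s := Ico t M) (fun i => (S i).1 = (S (i + 1)).1)
    simp only [Nat.card_Ico] at this
    omega
  have hK : (M : ℤ) < 2 * M := by omega
  have hA : (s : ℝ) ≤ tentHeight S M t := by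
    rw [hS.tentHeight_eq ht, le_sub_iff_add_le']
    exact_mod_cast hcount
  set r := s / 4
  have hr : |(S t).1| + r ≤ 2 * M := by
    have := hS.abs_add_abs_le ht htM
    have := abs_nonneg (S t).2
    omega
  have hwindow : (s : ℝ) ^ 2 / 8 ≤ (2 * r + 1) * (s - 2 * r) := by
    have h1 : ((4 * r : ℕ) : ℝ) ≤ s := by exact_mod_cast Nat.mul_div_le s 4
    have h2 : (s : ℝ) ≤ ((4 * r + 3 : ℕ) : ℝ) := by exact_mod_cast (by omega : s ≤ 4 * r + 3)
    push_cast at h1 h2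
    nlinarith
  calc 1 / 8 * (s : ℝ) ^ 2 ≤ (2 * r + 1) * (tentHeight S M t - 2 * r) := by nlinarith
    _ ≤ mass (2 * M) (pS S M t) :=
      mul_le_sum_Icc_of_tent_le r hr (colSum_nonneg (pS_nonneg S M t))
        (hS.tent_le_colSum hK ht htM)
    _ ≤ mass (2 * M) (pS S M 1) :=
      hS.mass_antitoneOn hK ⟨le_rfl, by omega⟩ ⟨ht, htM⟩ ht
    _ = tS S M := (hS.tS_eq_mass hK (by omega)).symm
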